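/- Let L = ℂh be a one-dimensional abelian Lie algebra over ℂ with basis {h}, and let B be a ℂ-basis of A. Then the family {p_h(χ) : χ ∈ 𝓕 with supp χ ⊆ B} is a ℂ-basis of U(L ⊗ A). -/

import Mathlib

open scoped TensorProduct

noncomputable section

set_option linter.unusedSectionVars false
set_option linter.unusedVariables false

namespace MapSuper

variable (A : Type*) [DecidableEq A]

/-- `|χ|`, the total size of a finitely supported multiset `χ ∈ 𝓕 = (A →₀ ℕ)`. -/
def wt (χ : A →₀ ℕ) : ℕ := χ.sum fun _ n => n

lemma wt_add (χ φ : A →₀ ℕ) : wt A (χ + φ) = wt A χ + wt A φ :=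
  Finsupp.sum_add_index' (fun _ => rfl) (fun _ _ _ => rfl)

lemma wt_pos {ψ : A →₀ ℕ} (h : ψ ≠ 0) : 0 < wt A ψ := by
  rcases Nat.eq_zero_or_pos (wt A ψ) with h0 | h1
  · exfalso
    apply h
    ext a
    by_cases ha : a ∈ ψ.support
    · exact Finset.sum_eq_zero_iff.mp h0 a ha
    · simpa using Finsupp.notMem_support_iff.mp ha
  · exact h1

lemma wt_sub_lt {χ ψ : A →₀ ℕ} (hle : ψ ≤ χ) (hne : ψ ≠ 0) : wt A (χ - ψ) < wt A χ := by
  have h1 : wt A (χ - ψ) + wt A ψ = wt A χ := by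
    rw [← wt_add, tsub_add_cancel_of_le hle]
  have := wt_pos A hne
  omega

/-- The multinomial coefficient `m(ψ) = |ψ|! / ∏_a ψ(a)!`. -/
def mc (ψ : A →₀ ℕ) : ℕ := Nat.multinomial ψ.support ψ

variable [CommRing A] [Algebra ℂ A]
variable (L : Type*) [LieRing L] [LieAlgebra ℂ L]

/-- `π(ψ) = ∏_a a^{ψ(a)} ∈ A`. -/
def piF (ψ : A →₀ ℕ) : A := ψ.prod fun a n => a ^ n

instance : LieAlgebra ℂ (A ⊗[ℂ] L) where
  lie_smul c x y := by
    rw [← algebraMap_smul A c y, lie_smul, algebraMap_smul]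

/-- The universal enveloping algebra `U(L ⊗ A)` of the map Lie algebra `L ⊗ A`
(realized as `A ⊗[ℂ] L` with bracket `⁅x ⊗ a, y ⊗ b⁆ = ⁅x, y⁆ ⊗ ab`). -/
abbrev UEA := UniversalEnvelopingAlgebra ℂ (A ⊗[ℂ] L)

/-- The element `x ⊗ a` of `U(L ⊗ A)`. -/
def emb (x : L) (a : A) : UEA A L := UniversalEnvelopingAlgebra.ι ℂ (a ⊗ₜ[ℂ] x)

/-- The divided power `u^{(r)} = u^r / r!`. -/
def dp (u : UEA A L) (r : ℕ) : UEA A L := ((r.factorial : ℂ)⁻¹) • u ^ r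

/-- The elements `p_h(χ)`, defined recursively by `p_h(0) = 1` and, for `χ ≠ 0`,
`p_h(χ) = -(1/|χ|) ∑_{0 ≠ ψ ≤ χ} m(ψ) (h ⊗ π(ψ)) p_h(χ - ψ)`. -/
def p (h : L) (χ : A →₀ ℕ) : UEA A L :=
  if hχ : χ = 0 then 1
  else (-(1 / (wt A χ : ℂ))) •
    ∑ ψ ∈ ((Finset.Iic χ).erase 0).attach,
      (mc A ψ.1 : ℂ) • (emb A L h (piF A ψ.1) * p h (χ - ψ.1))
termination_by wt A χ
decreasing_by
  have hm := ψ.2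
  rw [Finset.mem_erase, Finset.mem_Iic] at hm
  exact wt_sub_lt A hm.2 hm.1

lemma commute_emb {x y : L} (hxy : ⁅x, y⁆ = 0) (a b : A) :
    Commute (emb A L x a) (emb A L y b) := by
  unfold emb
  letI := LieRing.ofAssociativeRing (A := UEA A L)
  rw [commute_iff_lie_eq, ← LieHom.map_lie, LieAlgebra.ExtendScalars.bracket_tmul, hxy,
    TensorProduct.tmul_zero, map_zero]

lemma commute_dp {x y : L} (hxy : ⁅x, y⁆ = 0) (a b : A) (r s : ℕ) :
    Commute (dp A L (emb A L x a) r) (dp A L (emb A L y b) s) :=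
  (((commute_emb A L hxy a b).pow_pow r s).smul_left _).smul_right _

lemma commute_smul_dp {x y : L} (hxy : ⁅x, y⁆ = 0) (c d : ℂ) (a b : A) (r s : ℕ) :
    Commute (dp A L (c • emb A L x a) r) (dp A L (d • emb A L y b) s) :=
  (((((commute_emb A L hxy a b).smul_left c).smul_right d).pow_pow r s).smul_left _).smul_right _

lemma commute_smul_dp' {x y : L} (hxy : ⁅x, y⁆ = 0) (c d : ℂ) (a b : A) (r s : ℕ) :
    Commute (c • dp A L (emb A L x a) r) (d • dp A L (emb A L y b) s) :=
  ((commute_dp A L hxy a b r s).smul_left c).smul_right d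

/-- The submodule of elements of `U(L ⊗ A)` of degree at most `n`: the image, under the
canonical map `T(L ⊗ A) → U(L ⊗ A)`, of the sum of the homogeneous components of the tensor
algebra of degree at most `n`. -/
def degLE (n : ℕ) : Submodule ℂ (UEA A L) :=
  Submodule.map (UniversalEnvelopingAlgebra.mkAlgHom ℂ (A ⊗[ℂ] L)).toLinearMap
    (⨆ i ∈ Set.Iic n,
      (LinearMap.range (TensorAlgebra.ι ℂ : (A ⊗[ℂ] L) →ₗ[ℂ] TensorAlgebra ℂ (A ⊗[ℂ] L))) ^ i)

/-- `C(z, k) = z(z-1)⋯(z-k+1)/k!`. -/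
def intC (z : ℤ) (k : ℕ) : ℂ :=
  (∏ i ∈ Finset.range k, ((z : ℂ) - (i : ℂ))) / (k.factorial : ℂ)

/-- Garland's elements `D^x_{j,k}(d, c) = ∑_{λ ∈ 𝓟_k(j)} ∏_{m ∈ supp λ} (x ⊗ d^m c)^{(λ(m))}`,
where `𝓟_k(j)` is the set of finitely supported `λ : ℕ → ℕ` with `∑_m λ(m)·m = j` and
`∑_m λ(m) = k`. -/
def D (x : L) (j k : ℕ) (d c : A) : UEA A L :=
  ∑ᶠ (lam : ℕ →₀ ℕ) (_ : lam.sum (fun m t => t * m) = j ∧ lam.sum (fun _ t => t) = k),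
    lam.support.noncommProd (fun m => dp A L (emb A L x (d ^ m * c)) (lam m))
      (fun m _ m' _ _ => commute_dp A L (lie_self x) _ _ _ _)


/-! ### Auxiliary material for Statement 4 -/

section Aux4

lemma wt_eq_support_sum (χ : A →₀ ℕ) : wt A χ = ∑ a ∈ χ.support, χ a := rfl

lemma wt_le_of_le {ψ χ : A →₀ ℕ} (hle : ψ ≤ χ) : wt A ψ ≤ wt A χ := by
  have h1 : wt A ψ + wt A (χ - ψ) = wt A χ := by
    rw [← wt_add, add_tsub_cancel_of_le hle]
  omega

lemma wt_sub' {ψ χ : A →₀ ℕ} (hle : ψ ≤ χ) : wt A (χ - ψ) = wt A χ - wt A ψ := by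
  have h1 : wt A ψ + wt A (χ - ψ) = wt A χ := by
    rw [← wt_add, add_tsub_cancel_of_le hle]
  omega

lemma wt_single (a : A) (n : ℕ) : wt A (Finsupp.single a n) = n := by
  simp [wt]

lemma wt_eq_zero_iff {χ : A →₀ ℕ} : wt A χ = 0 ↔ χ = 0 := by
  constructor
  · intro h0
    by_contra hne
    have := wt_pos A hne
    omega
  · rintro rfl; simp [wt]

lemma eq_single_of_wt_eq_one {ψ : A →₀ ℕ} (h1 : wt A ψ = 1) :
    ∃ a ∈ ψ.support, ψ = Finsupp.single a 1 := by
  have hne : ψ ≠ 0 := by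
    intro h0; rw [h0] at h1; simp [wt] at h1
  obtain ⟨a, ha⟩ := Finsupp.support_nonempty_iff.mpr hne
  have hle : ψ a ≤ wt A ψ := by
    rw [wt_eq_support_sum]
    exact Finset.single_le_sum (fun x _ => Nat.zero_le _) ha
  have hpos : 0 < ψ a := Nat.pos_of_ne_zero (Finsupp.mem_support_iff.mp ha)
  have hψa : ψ a = 1 := by omega
  refine ⟨a, ha, ?_⟩
  have hrest : ∑ x ∈ ψ.support.erase a, ψ x = 0 := by
    have := Finset.add_sum_erase _ ψ ha
    rw [← wt_eq_support_sum] at this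
    omega
  ext x
  by_cases hx : x = a
  · subst hx; simp [hψa]
  · rw [Finsupp.single_apply, if_neg fun hax => hx hax.symm]
    by_cases hxs : x ∈ ψ.support
    · exact Finset.sum_eq_zero_iff.mp hrest x (Finset.mem_erase.mpr ⟨hx, hxs⟩)
    · exact Finsupp.notMem_support_iff.mp hxs

/-- The product of factorials `∏_a χ(a)!`. -/
def ffac (χ : A →₀ ℕ) : ℕ := χ.prod fun _ n => n.factorial

lemma ffac_ne_zero (χ : A →₀ ℕ) : (ffac A χ : ℂ) ≠ 0 := by
  have : ffac A χ ≠ 0 := Finset.prod_ne_zero_iff.mpr fun a _ => (Nat.factorial_pos _).ne'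
  exact_mod_cast this

/-- The leading coefficient `(-1)^{|χ|} / ∏_a χ(a)!` of `p_h(χ)`. -/
def ccoef (χ : A →₀ ℕ) : ℂ := (-1) ^ (wt A χ) / (ffac A χ : ℂ)

lemma ccoef_ne_zero (χ : A →₀ ℕ) : ccoef A χ ≠ 0 :=
  div_ne_zero (by simp [pow_ne_zero]) (ffac_ne_zero A χ)

lemma ccoef_zero : ccoef A (0 : A →₀ ℕ) = 1 := by
  simp [ccoef, ffac, wt]

lemma ffac_sub_single {χ : A →₀ ℕ} {a : A} (ha : a ∈ χ.support) :
    (χ a) * ffac A (χ - Finsupp.single a 1) = ffac A χ := by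
  classical
  set χ' := χ - Finsupp.single a 1 with hχ'
  have hχ'app : ∀ x, χ' x = χ x - (if x = a then 1 else 0) := by
    intro x
    rw [hχ', Finsupp.tsub_apply, Finsupp.single_apply]
    simp [eq_comm]
  have hsub : χ'.support ⊆ χ.support := Finsupp.support_tsub
  have h1 : ffac A χ' = ∏ x ∈ χ.support, (χ' x).factorial := by
    refine Finsupp.prod_of_support_subset _ hsub _ fun x _ => Nat.factorial_zero
  have h2 : ffac A χ = ∏ x ∈ χ.support, (χ x).factorial :=
    Finsupp.prod_of_support_subset _ subset_rfl _ fun x _ => Nat.factorial_zero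
  rw [h1, h2, ← Finset.mul_prod_erase _ _ ha, ← Finset.mul_prod_erase _ _ ha, ← mul_assoc]
  have hposa : 0 < χ a := Nat.pos_of_ne_zero (Finsupp.mem_support_iff.mp ha)
  congr 1
  · rw [hχ'app a, if_pos rfl]
    exact Nat.mul_factorial_pred hposa.ne'
  · refine Finset.prod_congr rfl fun x hx => ?_
    rw [hχ'app x, if_neg (Finset.mem_erase.mp hx).1, Nat.sub_zero]

lemma ccoef_sub_single {χ : A →₀ ℕ} {a : A} (ha : a ∈ χ.support) :
    ccoef A (χ - Finsupp.single a 1) = -(χ a : ℂ) * ccoef A χ := by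
  have hle : Finsupp.single a 1 ≤ χ :=
    Finsupp.single_le_iff.mpr (Nat.pos_of_ne_zero (Finsupp.mem_support_iff.mp ha))
  have hwt : wt A (χ - Finsupp.single a 1) = wt A χ - 1 := by
    rw [wt_sub' A hle, wt_single]
  have hwtpos : 0 < wt A χ := by
    have : χ ≠ 0 := fun h0 => by simp [h0] at ha
    exact wt_pos A this
  obtain ⟨m, hm⟩ : ∃ m, wt A χ = m + 1 := ⟨wt A χ - 1, by omega⟩
  have hffac := ffac_sub_single A ha
  rw [ccoef, ccoef, hwt, hm, Nat.add_sub_cancel, pow_succ]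
  have h2 : (ffac A χ : ℂ) = (χ a : ℂ) * (ffac A (χ - Finsupp.single a 1) : ℂ) := by
    exact_mod_cast hffac.symm
  rw [h2]
  have hχa : (χ a : ℂ) ≠ 0 := by
    exact_mod_cast Nat.pos_of_ne_zero (Finsupp.mem_support_iff.mp ha) |>.ne'
  have hf' := ffac_ne_zero A (χ - Finsupp.single a 1)
  field_simp

lemma mc_single (a : A) : mc A (Finsupp.single a 1) = 1 := by
  unfold mc
  rw [Finsupp.support_single_ne_zero a one_ne_zero]
  exact Nat.multinomial_singleton a _

lemma sum_ccoef_sub_single (χ : A →₀ ℕ) :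
    ∑ a ∈ χ.support, ccoef A (χ - Finsupp.single a 1) = -(wt A χ : ℂ) * ccoef A χ := by
  rw [Finset.sum_congr rfl fun a ha => ccoef_sub_single A ha, ← Finset.sum_mul,
    wt_eq_support_sum]
  push_cast
  rw [Finset.sum_neg_distrib]

/-- The weight-one part of `(Iic χ).erase 0`. -/
lemma filter_wt_one (χ : A →₀ ℕ) :
    (((Finset.Iic χ).erase 0).filter fun ψ => wt A ψ = 1) =
      χ.support.image fun a => Finsupp.single a 1 := by
  ext ψ
  simp only [Finset.mem_filter, Finset.mem_erase, Finset.mem_Iic, Finset.mem_image]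
  constructor
  · rintro ⟨⟨hne, hle⟩, hwt⟩
    obtain ⟨a, _, rfl⟩ := eq_single_of_wt_eq_one A hwt
    refine ⟨a, ?_, rfl⟩
    rw [Finsupp.mem_support_iff]
    have := Finsupp.single_le_iff.mp hle
    omega
  · rintro ⟨a, ha, rfl⟩
    have hpos : 0 < χ a := Nat.pos_of_ne_zero (Finsupp.mem_support_iff.mp ha)
    exact ⟨⟨fun h0 => one_ne_zero (Finsupp.single_eq_zero.mp h0), Finsupp.single_le_iff.mpr hpos⟩,
      wt_single A a 1⟩

end Aux4

section Aux4b

/-- The coordinate functional of a one-dimensional Lie algebra with basis `h`. -/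
def kappa (h : L) (hdim : ∀ x : L, ∃! c : ℂ, x = c • h) : L →ₗ[ℂ] ℂ where
  toFun x := (hdim x).choose
  map_add' x y := by
    refine ((hdim (x + y)).choose_spec.2 _ ?_).symm
    show x + y = ((hdim x).choose + (hdim y).choose) • h
    rw [add_smul, ← (hdim x).choose_spec.1, ← (hdim y).choose_spec.1]
  map_smul' c x := by
    refine ((hdim (c • x)).choose_spec.2 _ ?_).symm
    show c • x = ((RingHom.id ℂ) c • (hdim x).choose) • h
    simp only [RingHom.id_apply, smul_eq_mul]
    rw [mul_smul, ← (hdim x).choose_spec.1]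

lemma kappa_spec (h : L) (hdim : ∀ x : L, ∃! c : ℂ, x = c • h) (x : L) :
    x = kappa L h hdim x • h := (hdim x).choose_spec.1

lemma kappa_self (h : L) (hdim : ∀ x : L, ∃! c : ℂ, x = c • h) :
    kappa L h hdim h = 1 :=
  ((hdim h).choose_spec.2 1 (one_smul ℂ h).symm).symm

variable {B : Set A}

/-- The basis of `A` determined by `B`. -/
def basB (hBli : LinearIndependent ℂ ((↑) : B → A))
    (hBspan : Submodule.span ℂ B = ⊤) : Module.Basis B ℂ A :=
  Module.Basis.mk hBli (by rw [Subtype.range_coe]; exact hBspan.ge)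

/-- The linear map `A → ℂ[X_b : b ∈ B]` sending `a` to its coordinate expansion. -/
def ellA (hBli : LinearIndependent ℂ ((↑) : B → A))
    (hBspan : Submodule.span ℂ B = ⊤) : A →ₗ[ℂ] MvPolynomial B ℂ :=
  (Finsupp.linearCombination ℂ MvPolynomial.X).comp
    (basB A hBli hBspan).repr.toLinearMap

lemma ellA_coe (hBli : LinearIndependent ℂ ((↑) : B → A))
    (hBspan : Submodule.span ℂ B = ⊤) (b : B) :
    ellA A hBli hBspan (b : A) = MvPolynomial.X b := by
  have hb : (b : A) = basB A hBli hBspan b := (Module.Basis.mk_apply hBli _ b).symm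
  rw [ellA, LinearMap.comp_apply, hb]
  simp only [LinearEquiv.coe_coe, Module.Basis.repr_self]
  rw [Finsupp.linearCombination_single, one_smul]

lemma ellA_mem_deg_one (hBli : LinearIndependent ℂ ((↑) : B → A))
    (hBspan : Submodule.span ℂ B = ⊤) (a : A) :
    ellA A hBli hBspan a ∈ MvPolynomial.restrictTotalDegree B ℂ 1 := by
  have h1 : ellA A hBli hBspan a ∈ LinearMap.range (Finsupp.linearCombination ℂ
      (MvPolynomial.X : B → MvPolynomial B ℂ)) := ⟨(basB A hBli hBspan).repr a, rfl⟩
  rw [Finsupp.range_linearCombination] at h1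
  refine Submodule.span_le.mpr ?_ h1
  rintro _ ⟨b, rfl⟩
  rw [SetLike.mem_coe, MvPolynomial.mem_restrictTotalDegree, MvPolynomial.totalDegree_X]

lemma lie_eq_zero_tensor (hab : ∀ x y : L, ⁅x, y⁆ = 0) (u v : A ⊗[ℂ] L) : ⁅u, v⁆ = 0 := by
  induction u using TensorProduct.induction_on with
  | zero => rw [zero_lie]
  | tmul a x =>
    induction v using TensorProduct.induction_on with
    | zero => rw [lie_zero]
    | tmul b y =>
      rw [LieAlgebra.ExtendScalars.bracket_tmul, hab x y, TensorProduct.tmul_zero]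
    | add v w hv hw => rw [lie_add, hv, hw, add_zero]
  | add u w hu hw => rw [add_lie, hu, hw, add_zero]

lemma uea_mkAlgHom_surjective :
    Function.Surjective (UniversalEnvelopingAlgebra.mkAlgHom ℂ (A ⊗[ℂ] L)) :=
  RingCon.mkₐ_surjective _

lemma uea_commute_ι (hab : ∀ x y : L, ⁅x, y⁆ = 0) (x : A ⊗[ℂ] L) (w : UEA A L) :
    Commute (UniversalEnvelopingAlgebra.ι ℂ x) w := by
  obtain ⟨t, rfl⟩ := uea_mkAlgHom_surjective A L w
  induction t using TensorAlgebra.induction with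
  | algebraMap r =>
    rw [AlgHom.commutes]
    exact (Algebra.commutes r _).symm
  | ι y =>
    rw [show (UniversalEnvelopingAlgebra.mkAlgHom ℂ (A ⊗[ℂ] L)) (TensorAlgebra.ι ℂ y) =
        UniversalEnvelopingAlgebra.ι ℂ y from rfl]
    letI := LieRing.ofAssociativeRing (A := UEA A L)
    have hz : ⁅(UniversalEnvelopingAlgebra.ι ℂ x : UEA A L),
        UniversalEnvelopingAlgebra.ι ℂ y⁆ = 0 := by
      rw [← LieHom.map_lie, lie_eq_zero_tensor A L hab, map_zero]
    rw [Ring.lie_def] at hz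
    exact sub_eq_zero.mp hz
  | mul a b ha hb => rw [map_mul]; exact ha.mul_right hb
  | add a b ha hb => rw [map_add]; exact ha.add_right hb

lemma uea_mul_comm (hab : ∀ x y : L, ⁅x, y⁆ = 0) (u v : UEA A L) : u * v = v * u := by
  obtain ⟨t, rfl⟩ := uea_mkAlgHom_surjective A L u
  induction t using TensorAlgebra.induction with
  | algebraMap r => rw [AlgHom.commutes]; exact Algebra.commutes r v
  | ι y =>
    exact uea_commute_ι A L hab y v
  | mul a b ha hb => rw [map_mul]; exact Commute.mul_left ha hb
  | add a b ha hb => rw [map_add]; exact Commute.add_left ha hb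

/-- `U(L ⊗ A)` is commutative when `L` is abelian. -/
abbrev ueaCommRing (hab : ∀ x y : L, ⁅x, y⁆ = 0) : CommRing (UEA A L) :=
  { (inferInstance : Ring (UEA A L)) with mul_comm := uea_mul_comm A L hab }

/-- The bilinear map `A ⊗ L → ℂ[X_b]`, `a ⊗ x ↦ κ(x)·ℓ(a)`. -/
def phiAux (h : L) (hdim : ∀ x : L, ∃! c : ℂ, x = c • h)
    (hBli : LinearIndependent ℂ ((↑) : B → A)) (hBspan : Submodule.span ℂ B = ⊤) :
    (A ⊗[ℂ] L) →ₗ[ℂ] MvPolynomial B ℂ :=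
  TensorProduct.lift (LinearMap.mk₂ ℂ
    (fun a x => kappa L h hdim x • ellA A hBli hBspan a)
    (fun a b x => by simp only [map_add, smul_add])
    (fun c a x => by simp only [map_smul]; rw [smul_comm])
    (fun a x y => by simp only [map_add, add_smul])
    (fun c x a => by simp only [map_smul, smul_eq_mul, mul_smul]))

lemma phiAux_tmul (h : L) (hdim : ∀ x : L, ∃! c : ℂ, x = c • h)
    (hBli : LinearIndependent ℂ ((↑) : B → A)) (hBspan : Submodule.span ℂ B = ⊤)
    (a : A) (x : L) :
    phiAux A L h hdim hBli hBspan (a ⊗ₜ[ℂ] x) =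
      kappa L h hdim x • ellA A hBli hBspan a := by
  rw [phiAux, TensorProduct.lift.tmul, LinearMap.mk₂_apply]

/-- The algebra map `U(L ⊗ A) → ℂ[X_b : b ∈ B]`. -/
def Phi (h : L) (hdim : ∀ x : L, ∃! c : ℂ, x = c • h) (hab : ∀ x y : L, ⁅x, y⁆ = 0)
    (hBli : LinearIndependent ℂ ((↑) : B → A)) (hBspan : Submodule.span ℂ B = ⊤) :
    UEA A L →ₐ[ℂ] MvPolynomial B ℂ :=
  letI := LieRing.ofAssociativeRing (A := MvPolynomial B ℂ)
  UniversalEnvelopingAlgebra.lift ℂ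
    { phiAux A L h hdim hBli hBspan with
      map_lie' := by
        intros u v
        show phiAux A L h hdim hBli hBspan ⁅u, v⁆ = _
        rw [lie_eq_zero_tensor A L hab, map_zero, Ring.lie_def, mul_comm, sub_self] }

lemma Phi_ι (h : L) (hdim : ∀ x : L, ∃! c : ℂ, x = c • h) (hab : ∀ x y : L, ⁅x, y⁆ = 0)
    (hBli : LinearIndependent ℂ ((↑) : B → A)) (hBspan : Submodule.span ℂ B = ⊤)
    (w : A ⊗[ℂ] L) :
    Phi A L h hdim hab hBli hBspan (UniversalEnvelopingAlgebra.ι ℂ w) =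
      phiAux A L h hdim hBli hBspan w := by
  rw [Phi, UniversalEnvelopingAlgebra.lift_ι_apply]
  rfl

lemma Phi_emb (h : L) (hdim : ∀ x : L, ∃! c : ℂ, x = c • h) (hab : ∀ x y : L, ⁅x, y⁆ = 0)
    (hBli : LinearIndependent ℂ ((↑) : B → A)) (hBspan : Submodule.span ℂ B = ⊤)
    (a : A) :
    Phi A L h hdim hab hBli hBspan (emb A L h a) = ellA A hBli hBspan a := by
  rw [emb, Phi_ι, phiAux_tmul, kappa_self, one_smul]

end Aux4b

section Aux4c

lemma piF_single (a : A) : piF A (Finsupp.single a 1) = a := by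
  rw [piF, Finsupp.prod_single_index (pow_zero a), pow_one]

lemma p_zero (h : L) : p A L h 0 = 1 := by
  rw [p]
  exact dif_pos rfl

variable {B : Set A}

/-- Restriction of `χ : A →₀ ℕ` to a finsupp on `B`. -/
def resB (B : Set A) (χ : A →₀ ℕ) : ↥B →₀ ℕ := Finsupp.subtypeDomain (· ∈ B) χ

lemma resB_sum {χ : A →₀ ℕ} (hs : (χ.support : Set A) ⊆ B) :
    ((resB A B χ).sum fun _ n => n) = wt A χ := by
  rw [resB]
  exact Finsupp.sum_subtypeDomain_index (h := fun _ n => n) (fun x hx => hs hx)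

lemma resB_zero : resB A B (0 : A →₀ ℕ) = 0 := rfl

lemma resB_add (χ φ : A →₀ ℕ) : resB A B (χ + φ) = resB A B χ + resB A B φ :=
  Finsupp.subtypeDomain_add

lemma resB_single {a : A} (ha : a ∈ B) (n : ℕ) :
    resB A B (Finsupp.single a n) = Finsupp.single (⟨a, ha⟩ : B) n := by
  ext b
  rw [resB, Finsupp.subtypeDomain_apply, Finsupp.single_apply, Finsupp.single_apply]
  simp [Subtype.ext_iff]

lemma resB_sub_single_add {χ : A →₀ ℕ} {a : A} (ha : a ∈ χ.support) (haB : a ∈ B) :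
    Finsupp.single (⟨a, haB⟩ : B) 1 + resB A B (χ - Finsupp.single a 1) = resB A B χ := by
  have hle : Finsupp.single a 1 ≤ χ :=
    Finsupp.single_le_iff.mpr (Nat.pos_of_ne_zero (Finsupp.mem_support_iff.mp ha))
  rw [← resB_single A haB 1, ← resB_add A, add_tsub_cancel_of_le hle]

lemma restrict_mono {σ : Type*} {m k : ℕ} (hmk : m ≤ k) :
    MvPolynomial.restrictTotalDegree σ ℂ m ≤ MvPolynomial.restrictTotalDegree σ ℂ k := by
  intro q hq
  rw [MvPolynomial.mem_restrictTotalDegree] at hq ⊢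
  omega

lemma restrict_mul_mem {σ : Type*} {m k : ℕ} {q₁ q₂ : MvPolynomial σ ℂ}
    (h₁ : q₁ ∈ MvPolynomial.restrictTotalDegree σ ℂ m)
    (h₂ : q₂ ∈ MvPolynomial.restrictTotalDegree σ ℂ k) :
    q₁ * q₂ ∈ MvPolynomial.restrictTotalDegree σ ℂ (m + k) := by
  rw [MvPolynomial.mem_restrictTotalDegree] at h₁ h₂ ⊢
  exact le_trans (MvPolynomial.totalDegree_mul q₁ q₂) (add_le_add h₁ h₂)

variable (h : L) (hdim : ∀ x : L, ∃! c : ℂ, x = c • h) (hab : ∀ x y : L, ⁅x, y⁆ = 0)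
  (hBli : LinearIndependent ℂ ((↑) : B → A)) (hBspan : Submodule.span ℂ B = ⊤)

lemma Phi_p_rec (χ : A →₀ ℕ) (hχ : χ ≠ 0) :
    Phi A L h hdim hab hBli hBspan (p A L h χ) =
      (-(1 / (wt A χ : ℂ))) • ∑ ψ ∈ (Finset.Iic χ).erase 0,
        (mc A ψ : ℂ) • (ellA A hBli hBspan (piF A ψ) *
          Phi A L h hdim hab hBli hBspan (p A L h (χ - ψ))) := by
  conv_lhs => rw [p]
  rw [dif_neg hχ, map_smul, map_sum]
  simp only [map_smul, map_mul, Phi_emb A L h hdim hab hBli hBspan]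
  refine congrArg _ (Finset.sum_attach ((Finset.Iic χ).erase 0)
    (fun ψ => (mc A ψ : ℂ) • (ellA A hBli hBspan (piF A ψ) *
      Phi A L h hdim hab hBli hBspan (p A L h (χ - ψ)))))

lemma tri_zero :
    Phi A L h hdim hab hBli hBspan (p A L h 0) -
      ccoef A 0 • (MvPolynomial.monomial (resB A B (0 : A →₀ ℕ))) (1 : ℂ) = 0 := by
  rw [p_zero, map_one, ccoef_zero, resB_zero, MvPolynomial.monomial_zero', one_smul,
    MvPolynomial.C_1, sub_self]

lemma monomial_resB_mem {χ : A →₀ ℕ} (hs : (χ.support : Set A) ⊆ B) :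
    (MvPolynomial.monomial (resB A B χ)) (1 : ℂ) ∈
      MvPolynomial.restrictTotalDegree B ℂ (wt A χ) := by
  rw [MvPolynomial.mem_restrictTotalDegree,
    MvPolynomial.totalDegree_monomial _ one_ne_zero, resB_sum A hs]

lemma Phi_p_triangular : ∀ (n : ℕ) (χ : A →₀ ℕ), wt A χ ≤ n → (χ.support : Set A) ⊆ B →
    Phi A L h hdim hab hBli hBspan (p A L h χ) -
        ccoef A χ • (MvPolynomial.monomial (resB A B χ)) (1 : ℂ) ∈
      MvPolynomial.restrictTotalDegree B ℂ (wt A χ - 1) := by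
  intro n
  induction n with
  | zero =>
    intro χ hwt _
    have hχ : χ = 0 := by
      by_contra hne
      have := wt_pos A hne
      omega
    subst hχ
    rw [tri_zero A L h hdim hab hBli hBspan]
    exact zero_mem _
  | succ n IH =>
    intro χ hwt hsupp
    by_cases hχ0 : χ = 0
    · subst hχ0
      rw [tri_zero A L h hdim hab hBli hBspan]
      exact zero_mem _
    have hn₀ : 1 ≤ wt A χ := wt_pos A hχ0
    -- the members of the recursion sum
    set Φ' : UEA A L → MvPolynomial B ℂ := fun u => Phi A L h hdim hab hBli hBspan u with hΦ'
    set ℓ : A → MvPolynomial B ℂ := fun a => ellA A hBli hBspan a with hℓ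
    set g : (A →₀ ℕ) → MvPolynomial B ℂ :=
      fun ψ => (mc A ψ : ℂ) • (ℓ (piF A ψ) * Φ' (p A L h (χ - ψ))) with hg
    -- membership of `Φ'(p φ)` for smaller `φ`
    have Hmem : ∀ φ : A →₀ ℕ, wt A φ ≤ n → (φ.support : Set A) ⊆ B →
        Φ' (p A L h φ) ∈ MvPolynomial.restrictTotalDegree B ℂ (wt A φ) := by
      intro φ hφ hφB
      have h1 := IH φ hφ hφB
      have h2 := Submodule.smul_mem _ (ccoef A φ) (monomial_resB_mem A hφB)
      have h3 := Submodule.add_mem _ (restrict_mono (Nat.sub_le _ _) h1) h2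
      simpa using h3
    -- the sub-single remainders
    set r : A → MvPolynomial B ℂ := fun a =>
      Φ' (p A L h (χ - Finsupp.single a 1)) -
        ccoef A (χ - Finsupp.single a 1) •
          (MvPolynomial.monomial (resB A B (χ - Finsupp.single a 1))) (1 : ℂ) with hr
    have hsub_wt : ∀ a ∈ χ.support, wt A (χ - Finsupp.single a 1) = wt A χ - 1 := by
      intro a ha
      have hle : Finsupp.single a 1 ≤ χ :=
        Finsupp.single_le_iff.mpr (Nat.pos_of_ne_zero (Finsupp.mem_support_iff.mp ha))
      rw [wt_sub' A hle, wt_single]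
    have hsub_supp : ∀ ψ : A →₀ ℕ, ((χ - ψ).support : Set A) ⊆ B := by
      intro ψ
      refine le_trans ?_ hsupp
      exact_mod_cast Finsupp.support_tsub
    have hrmem : ∀ a ∈ χ.support, r a ∈
        MvPolynomial.restrictTotalDegree B ℂ (wt A χ - 1 - 1) := by
      intro a ha
      have := IH (χ - Finsupp.single a 1) (by rw [hsub_wt a ha]; omega) (hsub_supp _)
      rw [hsub_wt a ha] at this
      exact this
    -- the term-by-term description of weight-one summands
    have hterm : ∀ a ∈ χ.support,
        g (Finsupp.single a 1) =
          ccoef A (χ - Finsupp.single a 1) • (MvPolynomial.monomial (resB A B χ)) (1 : ℂ) +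
            ℓ a * r a := by
      intro a ha
      have haB : a ∈ B := hsupp ha
      have hΦp : Φ' (p A L h (χ - Finsupp.single a 1)) =
          ccoef A (χ - Finsupp.single a 1) •
            (MvPolynomial.monomial (resB A B (χ - Finsupp.single a 1))) (1 : ℂ) + r a := by
        rw [hr]; ring
      rw [hg]
      simp only [mc_single, Nat.cast_one, one_smul, piF_single]
      rw [hΦp, mul_add, mul_smul_comm]
      congr 2
      rw [hℓ]
      simp only
      rw [ellA_coe A hBli hBspan ⟨a, haB⟩, ← pow_one (MvPolynomial.X (⟨a, haB⟩ : B)),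
        ← MvPolynomial.monomial_single_add, resB_sub_single_add A ha haB]
    -- split the recursion sum
    have hinj : ∀ x ∈ χ.support, ∀ y ∈ χ.support,
        (fun a => Finsupp.single a (1 : ℕ)) x = (fun a => Finsupp.single a (1 : ℕ)) y →
          x = y := by
      intro x _ y _ hxy
      exact (Finsupp.single_left_inj one_ne_zero).mp hxy
    have hsplit : ∑ ψ ∈ (Finset.Iic χ).erase 0, g ψ =
        (-(wt A χ : ℂ) * ccoef A χ) • (MvPolynomial.monomial (resB A B χ)) (1 : ℂ) +
          ((∑ a ∈ χ.support, ℓ a * r a) +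
            ∑ ψ ∈ ((Finset.Iic χ).erase 0).filter (fun ψ => ¬ wt A ψ = 1), g ψ) := by
      rw [← Finset.sum_filter_add_sum_filter_not ((Finset.Iic χ).erase 0)
        (fun ψ => wt A ψ = 1) g, filter_wt_one, Finset.sum_image hinj,
        Finset.sum_congr rfl hterm, Finset.sum_add_distrib, ← Finset.sum_smul,
        sum_ccoef_sub_single, add_assoc]
    -- membership of the remainder terms
    have hR1 : (∑ a ∈ χ.support, ℓ a * r a) ∈
        MvPolynomial.restrictTotalDegree B ℂ (wt A χ - 1) := by
      refine Submodule.sum_mem _ fun a ha => ?_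
      by_cases hz : χ - Finsupp.single a 1 = 0
      · have : r a = 0 := by
          rw [hr]
          simp only
          rw [hz]
          exact tri_zero A L h hdim hab hBli hBspan
        rw [this, mul_zero]
        exact zero_mem _
      · have h2 : 1 ≤ wt A (χ - Finsupp.single a 1) := wt_pos A hz
        rw [hsub_wt a ha] at h2
        have hmul := restrict_mul_mem (ellA_mem_deg_one A hBli hBspan a) (hrmem a ha)
        exact restrict_mono (by omega) hmul
    have hR2 : (∑ ψ ∈ ((Finset.Iic χ).erase 0).filter (fun ψ => ¬ wt A ψ = 1), g ψ) ∈
        MvPolynomial.restrictTotalDegree B ℂ (wt A χ - 1) := by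
      refine Submodule.sum_mem _ fun ψ hψ => ?_
      rw [Finset.mem_filter, Finset.mem_erase, Finset.mem_Iic] at hψ
      obtain ⟨⟨hψ0, hψle⟩, hψwt⟩ := hψ
      have hψ2 : 2 ≤ wt A ψ := by
        have := wt_pos A hψ0
        omega
      have hψwtle : wt A ψ ≤ wt A χ := wt_le_of_le A hψle
      have hφwt : wt A (χ - ψ) = wt A χ - wt A ψ := wt_sub' A hψle
      have hΦmem : Φ' (p A L h (χ - ψ)) ∈
          MvPolynomial.restrictTotalDegree B ℂ (wt A (χ - ψ)) := by
        refine Hmem _ ?_ (hsub_supp _)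
        omega
      refine Submodule.smul_mem _ _ ?_
      have hmul := restrict_mul_mem (ellA_mem_deg_one A hBli hBspan (piF A ψ)) hΦmem
      exact restrict_mono (by omega) hmul
    -- assemble
    rw [Phi_p_rec A L h hdim hab hBli hBspan χ hχ0]
    have hgoal : (∑ ψ ∈ (Finset.Iic χ).erase 0,
        (mc A ψ : ℂ) • (ellA A hBli hBspan (piF A ψ) *
          Phi A L h hdim hab hBli hBspan (p A L h (χ - ψ)))) =
        ∑ ψ ∈ (Finset.Iic χ).erase 0, g ψ := rfl
    rw [hgoal, hsplit, smul_add, smul_smul]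
    have hc : -(1 / (wt A χ : ℂ)) * (-(wt A χ : ℂ) * ccoef A χ) = ccoef A χ := by
      have hne : (wt A χ : ℂ) ≠ 0 := by
        have : wt A χ ≠ 0 := by omega
        exact_mod_cast this
      field_simp
    rw [hc, add_sub_cancel_left]
    exact Submodule.smul_mem _ _ (Submodule.add_mem _ hR1 hR2)

lemma span_P :
    Submodule.span ℂ (Set.range fun χ : {χ : A →₀ ℕ // (χ.support : Set A) ⊆ B} =>
      Phi A L h hdim hab hBli hBspan (p A L h χ.1)) = ⊤ := by
  classical
  set SP := Submodule.span ℂ (Set.range fun χ : {χ : A →₀ ℕ // (χ.support : Set A) ⊆ B} =>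
    Phi A L h hdim hab hBli hBspan (p A L h χ.1)) with hSP
  have main : ∀ (n : ℕ) (q : MvPolynomial B ℂ), q.totalDegree ≤ n → q ∈ SP := by
    intro n
    induction n using Nat.strong_induction_on with
    | _ n IH =>
      intro q hq
      have hq' : q = ∑ v ∈ q.support, MvPolynomial.monomial v (MvPolynomial.coeff v q) :=
        MvPolynomial.as_sum q
      rw [hq']
      refine Submodule.sum_mem _ fun v hv => ?_
      have hdeg : (v.sum fun _ e => e) ≤ n := le_trans (MvPolynomial.le_totalDegree hv) hq
      set χ : A →₀ ℕ := Finsupp.extendDomain v with hχ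
      have hsupp : (χ.support : Set A) ⊆ B := Finsupp.support_extendDomain_subset v
      have hres : resB A B χ = v := Finsupp.subtypeDomain_extendDomain v
      have hwt : wt A χ = v.sum fun _ e => e := by
        rw [wt, hχ, Finsupp.extendDomain_eq_embDomain_subtype, Finsupp.sum_embDomain]
      set rr := Phi A L h hdim hab hBli hBspan (p A L h χ) -
        ccoef A χ • MvPolynomial.monomial v (1 : ℂ) with hrr
      have htri : rr ∈ MvPolynomial.restrictTotalDegree B ℂ (wt A χ - 1) := by
        rw [hrr, ← hres]
        exact Phi_p_triangular A L h hdim hab hBli hBspan (wt A χ) χ le_rfl hsupp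
      have hrr_span : rr ∈ SP := by
        by_cases h0 : χ = 0
        · have : rr = 0 := by
            rw [hrr, ← hres, h0]
            exact tri_zero A L h hdim hab hBli hBspan
          rw [this]; exact zero_mem _
        · have h1 : 1 ≤ wt A χ := wt_pos A h0
          have h2 : wt A χ ≤ n := by omega
          exact IH (wt A χ - 1) (by omega) rr
            ((MvPolynomial.mem_restrictTotalDegree _ _ _).mp htri)
      have hmem : Phi A L h hdim hab hBli hBspan (p A L h χ) ∈ SP :=
        Submodule.subset_span ⟨⟨χ, hsupp⟩, rfl⟩
      have hkey : MvPolynomial.monomial v (MvPolynomial.coeff v q) =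
          (MvPolynomial.coeff v q / ccoef A χ) •
            (Phi A L h hdim hab hBli hBspan (p A L h χ) - rr) := by
        rw [hrr, sub_sub_cancel, smul_smul, div_mul_cancel₀ _ (ccoef_ne_zero A χ),
          MvPolynomial.smul_monomial, smul_eq_mul, mul_one]
      rw [hkey]
      exact Submodule.smul_mem _ _ (Submodule.sub_mem _ hmem hrr_span)
  rw [Submodule.eq_top_iff']
  exact fun q => main q.totalDegree q le_rfl

lemma li_P :
    LinearIndependent ℂ (fun χ : {χ : A →₀ ℕ // (χ.support : Set A) ⊆ B} =>
      Phi A L h hdim hab hBli hBspan (p A L h χ.1)) := by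
  classical
  rw [linearIndependent_iff']
  suffices main : ∀ (n : ℕ) (s : Finset {χ : A →₀ ℕ // (χ.support : Set A) ⊆ B})
      (g : {χ : A →₀ ℕ // (χ.support : Set A) ⊆ B} → ℂ), (∀ i ∈ s, wt A i.1 ≤ n) →
      (∑ i ∈ s, g i • Phi A L h hdim hab hBli hBspan (p A L h i.1)) = 0 →
      ∀ i ∈ s, g i = 0 by
    intro s g hsum i hi
    exact main (s.sup fun j => wt A j.1) s g (fun j hj => Finset.le_sup (f := fun j => wt A j.1) hj) hsum i hi
  intro n
  induction n using Nat.strong_induction_on with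
  | _ n IH =>
    intro s g hbound hsum
    have htop : ∀ j ∈ s, wt A j.1 = n → g j = 0 := by
      intro j hj hwtj
      set d : ↥B →₀ ℕ := resB A B j.1 with hd
      have hdsum : (d.sum fun _ e => e) = n := by rw [hd, resB_sum A j.2, hwtj]
      have hco := congrArg (MvPolynomial.coeff d) hsum
      rw [MvPolynomial.coeff_sum, MvPolynomial.coeff_zero] at hco
      have hterm : ∀ k ∈ s, MvPolynomial.coeff d
          (g k • Phi A L h hdim hab hBli hBspan (p A L h k.1)) =
          if k = j then g k * ccoef A k.1 else 0 := by
        intro k hk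
        set rrk := Phi A L h hdim hab hBli hBspan (p A L h k.1) -
          ccoef A k.1 • MvPolynomial.monomial (resB A B k.1) (1 : ℂ) with hrrk
        have hPk : Phi A L h hdim hab hBli hBspan (p A L h k.1) =
            ccoef A k.1 • MvPolynomial.monomial (resB A B k.1) (1 : ℂ) + rrk := by
          rw [hrrk]; ring
        have hcorr : MvPolynomial.coeff d rrk = 0 := by
          by_cases hk0 : k.1 = 0
          · have : rrk = 0 := by
              rw [hrrk, hk0]
              exact tri_zero A L h hdim hab hBli hBspan
            rw [this, MvPolynomial.coeff_zero]
          · have h1 : 1 ≤ wt A k.1 := wt_pos A hk0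
            have h2 : wt A k.1 ≤ n := hbound k hk
            have htrik := Phi_p_triangular A L h hdim hab hBli hBspan (wt A k.1) k.1
              le_rfl k.2
            rw [← hrrk] at htrik
            have hdeg := (MvPolynomial.mem_restrictTotalDegree _ _ _).mp htrik
            refine MvPolynomial.coeff_eq_zero_of_totalDegree_lt ?_
            have hdsum' : (∑ i ∈ d.support, d i) = n := hdsum
            omega
        rw [hPk, MvPolynomial.coeff_smul, MvPolynomial.coeff_add, hcorr, add_zero,
          MvPolynomial.coeff_smul, MvPolynomial.coeff_monomial]
        by_cases hkj : k = j
        · subst hkj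
          rw [if_pos rfl, if_pos rfl]
          simp [smul_eq_mul]
        · have hne : resB A B k.1 ≠ d := by
            intro heq
            refine hkj (Subtype.ext ?_)
            have h1 : Finsupp.extendDomain (resB A B k.1) = k.1 :=
              Finsupp.extendDomain_subtypeDomain _ fun a ha => k.2 ha
            have h2 : Finsupp.extendDomain (resB A B j.1) = j.1 :=
              Finsupp.extendDomain_subtypeDomain _ fun a ha => j.2 ha
            rw [← h1, ← h2, hd] at *
            rw [heq]
          rw [if_neg hne, if_neg hkj]
          simp
      rw [Finset.sum_congr rfl hterm, Finset.sum_ite_eq' s j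
        (fun k => g k * ccoef A k.1), if_pos hj] at hco
      exact (mul_eq_zero.mp hco).resolve_right (ccoef_ne_zero A _)
    intro i hi
    by_cases hwi : wt A i.1 = n
    · exact htop i hi hwi
    · have hn1 : 1 ≤ n := by
        have := hbound i hi
        rcases Nat.eq_zero_or_pos n with h0 | h1
        · exfalso; exact hwi (by omega)
        · exact h1
      have hsum' : (∑ k ∈ s.filter fun j => ¬ wt A j.1 = n, g k •
          Phi A L h hdim hab hBli hBspan (p A L h k.1)) = 0 := by
        have hspl := Finset.sum_filter_add_sum_filter_not s (fun j => wt A j.1 = n)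
          (fun k => g k • Phi A L h hdim hab hBli hBspan (p A L h k.1))
        have hzero : (∑ k ∈ s.filter fun j => wt A j.1 = n, g k •
            Phi A L h hdim hab hBli hBspan (p A L h k.1)) = 0 := by
          refine Finset.sum_eq_zero fun k hk => ?_
          rw [Finset.mem_filter] at hk
          rw [htop k hk.1 hk.2, zero_smul]
        rw [← hspl, hzero, zero_add] at hsum
        exact hsum
      refine IH (n - 1) (by omega) (s.filter fun j => ¬ wt A j.1 = n) g ?_ hsum' i
        (Finset.mem_filter.mpr ⟨hi, hwi⟩)
      intro j hj
      rw [Finset.mem_filter] at hj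
      have := hbound j hj.1
      have := hj.2
      omega

end Aux4c

/-- If `L = ℂh` is a one-dimensional abelian Lie algebra with basis `{h}` and `B`
is a `ℂ`-basis of `A`, then `{p_h(χ) : χ ∈ 𝓕, supp χ ⊆ B}` is a `ℂ`-basis of `U(L ⊗ A)`. -/
theorem stmt4 (h : L) (hdim : ∀ x : L, ∃! c : ℂ, x = c • h)
    (habelian : ∀ x y : L, ⁅x, y⁆ = 0)
    (B : Set A) (hBli : LinearIndependent ℂ ((↑) : B → A))
    (hBspan : Submodule.span ℂ B = ⊤) :
    LinearIndependent ℂ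
        (fun χ : {χ : A →₀ ℕ // (χ.support : Set A) ⊆ B} => p A L h χ.1) ∧
      Submodule.span ℂ
        (Set.range fun χ : {χ : A →₀ ℕ // (χ.support : Set A) ⊆ B} => p A L h χ.1) = ⊤ := by
  classical
  constructor
  · exact LinearIndependent.of_comp (Phi A L h hdim habelian hBli hBspan).toLinearMap
      (li_P A L h hdim habelian hBli hBspan)
  · letI := LieRing.ofAssociativeRing (A := UEA A L)
    letI : CommRing (UEA A L) := ueaCommRing A L habelian
    set Ψ : MvPolynomial B ℂ →ₐ[ℂ] UEA A L :=
      MvPolynomial.aeval (fun b : B => emb A L h (b : A)) with hΨ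
    have hΨX : ∀ b : B, Ψ (MvPolynomial.X b) = emb A L h (b : A) := by
      intro b
      rw [hΨ, MvPolynomial.aeval_X]
    have hΨℓ : ∀ a : A, Ψ (ellA A hBli hBspan a) = emb A L h a := by
      have hmaps : Ψ.toLinearMap ∘ₗ ellA A hBli hBspan =
          (UniversalEnvelopingAlgebra.ι ℂ (L := A ⊗[ℂ] L)).toLinearMap ∘ₗ
            ((TensorProduct.mk ℂ A L).flip h) := by
        refine Module.Basis.ext (basB A hBli hBspan) fun b => ?_
        have hb : basB A hBli hBspan b = (b : A) := Module.Basis.mk_apply hBli _ b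
        rw [LinearMap.comp_apply, LinearMap.comp_apply, hb, ellA_coe A hBli hBspan b]
        exact hΨX b
      intro a
      exact LinearMap.congr_fun hmaps a
    have hΨΦ : ∀ u : UEA A L, Ψ (Phi A L h hdim habelian hBli hBspan u) = u := by
      have hcomp : Ψ.comp (Phi A L h hdim habelian hBli hBspan) =
          AlgHom.id ℂ (UEA A L) := by
        apply UniversalEnvelopingAlgebra.hom_ext
        apply LieHom.ext
        intro w
        simp only [LieHom.coe_comp, Function.comp_apply, AlgHom.coe_toLieHom,
          AlgHom.coe_comp, AlgHom.coe_id, id_eq]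
        rw [Phi_ι]
        induction w using TensorProduct.induction_on with
        | zero => rw [LinearMap.map_zero, map_zero, map_zero]
        | tmul a x =>
          rw [phiAux_tmul, map_smul, hΨℓ, emb, ← map_smul (UniversalEnvelopingAlgebra.ι ℂ),
            ← TensorProduct.tmul_smul, ← kappa_spec L h hdim x]
        | add u v hu hv => rw [LinearMap.map_add, map_add, map_add, hu, hv]
      intro u
      have := DFunLike.congr_fun hcomp u
      simpa using this
    have hΨΦ' : ∀ u : UEA A L,
        Ψ.toLinearMap (Phi A L h hdim habelian hBli hBspan u) = u := fun u => hΨΦ u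
    rw [Submodule.eq_top_iff']
    intro u
    have h1 : Phi A L h hdim habelian hBli hBspan u ∈
        Submodule.span ℂ (Set.range fun χ : {χ : A →₀ ℕ // (χ.support : Set A) ⊆ B} =>
          Phi A L h hdim habelian hBli hBspan (p A L h χ.1)) := by
      rw [span_P A L h hdim habelian hBli hBspan]
      trivial
    have h2 := Submodule.mem_map_of_mem (f := Ψ.toLinearMap) h1
    rw [Submodule.map_span] at h2
    have h3 : Ψ.toLinearMap ''
        (Set.range fun χ : {χ : A →₀ ℕ // (χ.support : Set A) ⊆ B} =>
          Phi A L h hdim habelian hBli hBspan (p A L h χ.1)) =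
        Set.range fun χ : {χ : A →₀ ℕ // (χ.support : Set A) ⊆ B} => p A L h χ.1 := by
      rw [← Set.range_comp]
      refine congrArg _ (funext fun χ => ?_)
      exact hΨΦ' (p A L h χ.1)
    rw [h3, hΨΦ' u] at h2
    exact h2

end MapSuper
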